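/- Let Φ and Ψ be flows on a topological space M, let γ' : M → ℝ be continuous, and set γ(x,t) := ∫₀ᵗ γ'(Φ^τ(x)) dτ. Let H : M → M be a bijection with H(Φ^t(x)) = Ψ^{γ(x,t)}(H(x)) for all x ∈ M and t ∈ ℝ, and let β : M × ℝ → ℝ satisfy γ(H^{-1}(y), β(y,t)) = t for all y ∈ M and t ∈ ℝ. Then for every continuous J : M → ℝ, every y ∈ M and every t ∈ ℝ, one has the substitution identity ∫₀ᵗ J(Ψ^τ(y)) dτ = ∫₀^{β(y,t)} J(H(Φ^κ(H^{-1}(y)))) · γ'(Φ^κ(H^{-1}(y))) dκ. -/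
import Mathlib

open MeasureTheory

/-- The substitution identity for integrals of potentials along orbits under
an orbit equivalence with reparametrization cocycle `γ(x,t) = ∫₀ᵗ γ'(Φ^τ(x)) dτ`. -/
theorem orbit_equivalence_integral_substitution {M : Type*} [TopologicalSpace M]
    (Φ Ψ : ℝ → M → M)
    (hΦcont : Continuous fun p : ℝ × M => Φ p.1 p.2)
    (hΦ0 : ∀ x : M, Φ 0 x = x)
    (hΦadd : ∀ (t₁ t₂ : ℝ) (x : M), Φ (t₁ + t₂) x = Φ t₂ (Φ t₁ x))
    (hΨcont : Continuous fun p : ℝ × M => Ψ p.1 p.2)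
    (hΨ0 : ∀ x : M, Ψ 0 x = x)
    (hΨadd : ∀ (t₁ t₂ : ℝ) (x : M), Ψ (t₁ + t₂) x = Ψ t₂ (Ψ t₁ x))
    (γ' : M → ℝ) (hγ' : Continuous γ')
    (γ : M → ℝ → ℝ)
    (hγdef : ∀ (x : M) (t : ℝ), γ x t = ∫ τ in (0:ℝ)..t, γ' (Φ τ x))
    (H : M ≃ M)
    (hconj : ∀ (x : M) (t : ℝ), H (Φ t x) = Ψ (γ x t) (H x))
    (β : M → ℝ → ℝ)
    (hβ : ∀ (y : M) (t : ℝ), γ (H.symm y) (β y t) = t) :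
    ∀ (J : M → ℝ), Continuous J → ∀ (y : M) (t : ℝ),
      (∫ τ in (0:ℝ)..t, J (Ψ τ y)) =
        ∫ κ in (0:ℝ)..(β y t), J (H (Φ κ (H.symm y))) * γ' (Φ κ (H.symm y)) := by
  intro J hJ y t
  set x := H.symm y with hx
  have hΦx : Continuous fun τ : ℝ => Φ τ x :=
    hΦcont.comp (continuous_id.prodMk continuous_const)
  have hcontint : Continuous fun τ : ℝ => γ' (Φ τ x) := hγ'.comp hΦx
  have hderiv : ∀ s : ℝ, HasDerivAt (γ x) (γ' (Φ s x)) s := by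
    intro s
    have := (hcontint.integral_hasStrictDerivAt 0 s).hasDerivAt
    exact this.congr_of_eventuallyEq (Filter.Eventually.of_forall fun u => hγdef x u)
  have hg : Continuous fun u : ℝ => J (Ψ u y) :=
    hJ.comp (hΨcont.comp (continuous_id.prodMk continuous_const))
  have key := intervalIntegral.integral_comp_mul_deriv (a := 0) (b := β y t)
    (f := γ x) (f' := fun κ => γ' (Φ κ x)) (g := fun u => J (Ψ u y))
    (fun s _ => hderiv s) hcontint.continuousOn hg
  have hγ0 : γ x 0 = 0 := by simp [hγdef]
  rw [hγ0, hβ y t] at key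
  rw [← key]
  apply intervalIntegral.integral_congr
  intro κ _
  have : H (Φ κ x) = Ψ (γ x κ) y := by rw [hconj x κ, hx, H.apply_symm_apply]
  simp [Function.comp, this]
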